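/- arXiv:2605.20629 — 3 statements merged into one kernel-verified Lean document; each statement's English description precedes it below -/
import Mathlib

section
/- Let n ≥ 1 and let P be a family of subsets of [n] = {1,…,n} containing every singleton {a} for a ∈ [n], and such that P, ordered by inclusion, is a lattice (every two members of P have a least upper bound and a greatest lower bound within P). Then P contains an induced subposet order-isomorphic to the Boolean lattice B(3) if and only if there exist S_1, S_2, S_3 ∈ P and pairwise distinct a_1, a_2, a_3 ∈ [n] such that a_1, a_2 ∈ S_1 and a_3 ∉ S_1; a_1, a_3 ∈ S_2 and a_2 ∉ S_2; and a_2, a_3 ∈ S_3 and a_1 ∉ S_3 (i.e., the binary matrix whose columns are the characteristic vectors of the members of P contains a triangle up to row and column permutations). -/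
/-!
A triangle is a triple of points `a₁, a₂, a₃`, each cut off from the other two by a member of `P`.
A copy `f` of `B(3)` in `P` yields one: take `aᵢ ∈ f {i} \ f {i}ᶜ`, which is cut off by `f {i}ᶜ`.
Conversely, send `x ⊆ {1, 2, 3}` to the least member of `P` containing `{aᵢ | i ∈ x}`; it exists
because `P` is finite and the members above a set are closed under meets (the meet still lies
above the singletons `{aᵢ}`). This member contains `aⱼ` exactly when `j ∈ x`, since otherwise it
lies inside the member cutting off `aⱼ`, so the map is an order embedding.
-/

theorem Set.Finite.exists_isLeast_of_directedOn {β : Type*} [PartialOrder β] {s : Set β}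
    (hs : s.Finite) (hne : s.Nonempty) (hd : DirectedOn (· ≥ ·) s) : ∃ m, IsLeast s m := by
  obtain ⟨m, hm⟩ := hs.exists_minimal hne
  refine ⟨m, hm.prop, fun y hy => ?_⟩
  obtain ⟨z, hz, hzm, hzy⟩ := hd m hm.prop y hy
  exact hm.eq_of_le hz hzm ▸ hzy

variable {α ι : Type*} {P : Set (Finset α)}

theorem exists_isLeast_superset [Finite α] (hsing : ∀ a : α, ({a} : Finset α) ∈ P)
    (hmeet : ∀ S ∈ P, ∀ T ∈ P, ∃ M ∈ P, M ⊆ S ∧ M ⊆ T ∧ ∀ U ∈ P, U ⊆ S → U ⊆ T → U ⊆ M)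
    {s : Set α} (hs : ∃ U ∈ P, s ⊆ U) : ∃ C, IsLeast {U ∈ P | s ⊆ U} C := by
  obtain ⟨U, hU⟩ := hs
  refine Set.toFinite _ |>.exists_isLeast_of_directedOn ⟨U, hU⟩ ?_
  rintro S ⟨hSP, hsS⟩ T ⟨hTP, hsT⟩
  obtain ⟨M, hMP, hMS, hMT, hM⟩ := hmeet S hSP T hTP
  refine ⟨M, ⟨hMP, fun b hb => ?_⟩, hMS, hMT⟩
  exact Finset.singleton_subset_iff.1 <|
    hM {b} (hsing b) (by simpa using hsS hb) (by simpa using hsT hb)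

def Separates (P : Set (Finset α)) (a : ι → α) : Prop :=
  ∀ i, ∃ S ∈ P, a i ∉ S ∧ ∀ j ≠ i, a j ∈ S

namespace Separates

variable {a : ι → α}

theorem injective (h : Separates P a) : Function.Injective a := by
  intro i j hij
  by_contra hne
  obtain ⟨S, -, hiS, hS⟩ := h i
  exact hiS (hij ▸ hS j (Ne.symm hne))

theorem exists_mem_forall_mem [Nontrivial ι] (h : Separates P a)
    (hjoin : ∀ S ∈ P, ∀ T ∈ P, ∃ J ∈ P, S ⊆ J ∧ T ⊆ J ∧ ∀ U ∈ P, S ⊆ U → T ⊆ U → J ⊆ U) :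
    ∃ J ∈ P, ∀ k, a k ∈ J := by
  obtain ⟨i, j, hij⟩ := exists_pair_ne ι
  obtain ⟨S, hSP, -, hS⟩ := h i
  obtain ⟨T, hTP, -, hT⟩ := h j
  obtain ⟨J, hJP, hSJ, hTJ, -⟩ := hjoin S hSP T hTP
  refine ⟨J, hJP, fun k => ?_⟩
  obtain rfl | hki := eq_or_ne k i
  · exact hTJ (hT k hij)
  · exact hSJ (hS k hki)

theorem mem_iff_of_isLeast (h : Separates P a) {x : Set ι} {C : Finset α}
    (hC : IsLeast {U ∈ P | a '' x ⊆ U} C) (i : ι) : a i ∈ C ↔ i ∈ x := by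
  refine ⟨fun hiC => ?_, fun hi => hC.1.2 (Set.mem_image_of_mem a hi)⟩
  by_contra hix
  obtain ⟨S, hSP, hiS, hS⟩ := h i
  have hxS : a '' x ⊆ S := by
    rintro _ ⟨j, hj, rfl⟩
    exact hS j (ne_of_mem_of_not_mem hj hix)
  exact hiS (hC.2 ⟨hSP, hxS⟩ hiC)

theorem exists_booleanEmbedding [Finite α] [Nontrivial ι] (h : Separates P a)
    (hsing : ∀ a : α, ({a} : Finset α) ∈ P)
    (hjoin : ∀ S ∈ P, ∀ T ∈ P, ∃ J ∈ P, S ⊆ J ∧ T ⊆ J ∧ ∀ U ∈ P, S ⊆ U → T ⊆ U → J ⊆ U)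
    (hmeet : ∀ S ∈ P, ∀ T ∈ P, ∃ M ∈ P, M ⊆ S ∧ M ⊆ T ∧ ∀ U ∈ P, U ⊆ S → U ⊆ T → U ⊆ M) :
    ∃ f : Finset ι → Finset α, (∀ x, f x ∈ P) ∧ ∀ x y, x ⊆ y ↔ f x ⊆ f y := by
  obtain ⟨J, hJP, hJ⟩ := h.exists_mem_forall_mem hjoin
  have hC : ∀ x : Finset ι, ∃ C, IsLeast {U ∈ P | a '' x ⊆ U} C := fun x =>
    exists_isLeast_superset hsing hmeet ⟨J, hJP, by rintro _ ⟨i, -, rfl⟩; exact hJ i⟩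
  choose F hF using hC
  refine ⟨F, fun x => (hF x).1.1, fun x y => ⟨fun hxy => ?_, fun hxy i hi => ?_⟩⟩
  · exact (hF x).2 ⟨(hF y).1.1, (Set.image_mono (by simpa using hxy)).trans (hF y).1.2⟩
  · exact (h.mem_iff_of_isLeast (hF y) i).1 (hxy ((h.mem_iff_of_isLeast (hF x) i).2 hi))

end Separates

theorem exists_separates_of_subset_iff [Fintype ι] [DecidableEq ι] {f : Finset ι → Finset α}
    (hfP : ∀ x, f x ∈ P) (hf : ∀ x y, x ⊆ y ↔ f x ⊆ f y) : ∃ a : ι → α, Separates P a := by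
  have hpt : ∀ i, ∃ b ∈ f {i}, b ∉ f {i}ᶜ := fun i =>
    Finset.not_subset.1 fun h => by simpa using (hf _ _).2 h
  choose a ha hna using hpt
  refine ⟨a, fun i => ⟨f {i}ᶜ, hfP _, hna i, fun j hj => (hf {j} {i}ᶜ).1 ?_ (ha j)⟩⟩
  simpa using hj.symm

theorem exists_triangle_iff_exists_separates :
    (∃ S₁ ∈ P, ∃ S₂ ∈ P, ∃ S₃ ∈ P, ∃ a₁ a₂ a₃ : α,
        a₁ ≠ a₂ ∧ a₁ ≠ a₃ ∧ a₂ ≠ a₃ ∧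
        a₁ ∈ S₁ ∧ a₂ ∈ S₁ ∧ a₃ ∉ S₁ ∧
        a₁ ∈ S₂ ∧ a₃ ∈ S₂ ∧ a₂ ∉ S₂ ∧
        a₂ ∈ S₃ ∧ a₃ ∈ S₃ ∧ a₁ ∉ S₃) ↔
      ∃ a : Fin 3 → α, Separates P a := by
  constructor
  · rintro ⟨S₁, hS₁, S₂, hS₂, S₃, hS₃, a₁, a₂, a₃, -, -, -, h₁₁, h₂₁, h₃₁, h₁₂, h₃₂, h₂₂,
      h₂₃, h₃₃, h₁₃⟩
    refine ⟨![a₁, a₂, a₃], fun i => ?_⟩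
    fin_cases i
    · exact ⟨S₃, hS₃, h₁₃, fun j hj => by fin_cases j <;> simp_all⟩
    · exact ⟨S₂, hS₂, h₂₂, fun j hj => by fin_cases j <;> simp_all⟩
    · exact ⟨S₁, hS₁, h₃₁, fun j hj => by fin_cases j <;> simp_all⟩
  · rintro ⟨a, ha⟩
    obtain ⟨S₃, hS₃, h₁₃, h₃⟩ := ha 0
    obtain ⟨S₂, hS₂, h₂₂, h₂⟩ := ha 1
    obtain ⟨S₁, hS₁, h₃₁, h₁⟩ := ha 2
    exact ⟨S₁, hS₁, S₂, hS₂, S₃, hS₃, a 0, a 1, a 2, ha.injective.ne (by decide),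
      ha.injective.ne (by decide), ha.injective.ne (by decide), h₁ 0 (by decide),
      h₁ 1 (by decide), h₃₁, h₂ 0 (by decide), h₂ 2 (by decide), h₂₂, h₃ 1 (by decide),
      h₃ 2 (by decide), h₁₃⟩

/-- Let `P` be a family of subsets of `Fin n` containing every singleton and
forming a lattice under inclusion (every two members have a least upper bound
and a greatest lower bound within `P`). Then `P` contains an induced subposet
order-isomorphic to the Boolean lattice `B(3)` if and only if there are
`S₁, S₂, S₃ ∈ P` and pairwise distinct `a₁, a₂, a₃` forming a triangle
configuration. -/
theorem b3_free_iff_no_triangle (n : ℕ) (P : Set (Finset (Fin n)))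
    (hsing : ∀ a : Fin n, ({a} : Finset (Fin n)) ∈ P)
    (hjoin : ∀ S ∈ P, ∀ T ∈ P, ∃ J ∈ P, S ⊆ J ∧ T ⊆ J ∧
      ∀ U ∈ P, S ⊆ U → T ⊆ U → J ⊆ U)
    (hmeet : ∀ S ∈ P, ∀ T ∈ P, ∃ M ∈ P, M ⊆ S ∧ M ⊆ T ∧
      ∀ U ∈ P, U ⊆ S → U ⊆ T → U ⊆ M) :
    (∃ f : Finset (Fin 3) → Finset (Fin n), (∀ x, f x ∈ P) ∧
        ∀ x y : Finset (Fin 3), x ⊆ y ↔ f x ⊆ f y) ↔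
      ∃ S₁ ∈ P, ∃ S₂ ∈ P, ∃ S₃ ∈ P, ∃ a₁ a₂ a₃ : Fin n,
        a₁ ≠ a₂ ∧ a₁ ≠ a₃ ∧ a₂ ≠ a₃ ∧
        a₁ ∈ S₁ ∧ a₂ ∈ S₁ ∧ a₃ ∉ S₁ ∧
        a₁ ∈ S₂ ∧ a₃ ∈ S₂ ∧ a₂ ∉ S₂ ∧
        a₂ ∈ S₃ ∧ a₃ ∈ S₃ ∧ a₁ ∉ S₃ := by
  rw [exists_triangle_iff_exists_separates]
  exact ⟨fun ⟨_, hfP, hf⟩ => exists_separates_of_subset_iff hfP hf,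
    fun ⟨_, ha⟩ => ha.exists_booleanEmbedding hsing hjoin hmeet⟩
end

section
/- Let D be a maximal ASPD on a finite set A with n = |A|. Then |D| = 2^{n−1}, and if n ≥ 2 then D has exactly two bottom alternatives. -/
/-!
Induction on `|A|`. By maximality, a preference belongs to `D` as soon as adding it keeps `D` an
ASPD. Hence, for a bottom alternative `c` of `D`, moving `c` to the last place of any preference
of `D` stays inside `D`, and the preferences of `D` ending in `c`, with `c` dropped, form a maximal
ASPD on `A \ {c}`. No triple consists of bottom alternatives (it would have no never-last
element), while there are at least two of them: if all of `D` ended in `a`, swapping the last two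
alternatives of a preference of `D` would keep `D` an ASPD. So `D` splits into two halves of
size `2 ^ (n - 2)`.
-/

variable {α : Type*} [DecidableEq α]

/-- Preferences (linear orders written as lists, most preferred first) on `A`. -/
def PrefOn (A : Finset α) : Set (List α) :=
  {l | l.Nodup ∧ l.toFinset = A}

/-- Restriction of a preference to a subset `T`. -/
def restrictPref (l : List α) (T : Finset α) : List α :=
  l.filter (fun a => decide (a ∈ T))

/-- Arrow's single-peaked domain on `A`: for every triple `T ⊆ A` some `x ∈ T`
is never ranked last in the restriction of the domain to `T`. -/
def IsASPD (A : Finset α) (D : Set (List α)) : Prop :=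
  D ⊆ PrefOn A ∧
    ∀ T : Finset α, T ⊆ A → T.card = 3 →
      ∃ x ∈ T, ∀ l ∈ D, (restrictPref l T).getLast? ≠ some x

/-- Maximal Arrow's single-peaked domain on `A`. -/
def IsMaximalASPD (A : Finset α) (D : Set (List α)) : Prop :=
  IsASPD A D ∧ ∀ l ∈ PrefOn A, l ∉ D → ¬ IsASPD A (insert l D)

def bottoms (D : Set (List α)) : Set α :=
  {a | ∃ l ∈ D, l.getLast? = some a}

def dropBottom (D : Set (List α)) (c : α) : Set (List α) :=
  List.dropLast '' {l ∈ D | l.getLast? = some c}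

def NeverLast (D : Set (List α)) (T : Finset α) (x : α) : Prop :=
  ∀ l ∈ D, (restrictPref l T).getLast? ≠ some x

section Restriction

variable (l : List α) {T S : Finset α} {a c : α}

theorem restrictPref_append_singleton_of_mem (h : c ∈ T) :
    restrictPref (l ++ [c]) T = restrictPref l T ++ [c] := by
  simp [restrictPref, h]

theorem restrictPref_append_singleton_of_notMem (h : c ∉ T) :
    restrictPref (l ++ [c]) T = restrictPref l T := by
  simp [restrictPref, h]

theorem restrictPref_restrictPref (h : T ⊆ S) :
    restrictPref (restrictPref l S) T = restrictPref l T := by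
  simp only [restrictPref, List.filter_filter]
  exact List.filter_congr fun y _ => by grind

variable {l}

theorem getLast?_restrictPref (h : l.getLast? = some c) (hc : c ∈ T) :
    (restrictPref l T).getLast? = some c := by
  obtain ⟨s, rfl⟩ := List.getLast?_eq_some_iff.1 h
  rw [restrictPref_append_singleton_of_mem _ hc, List.getLast?_concat]

theorem restrictPref_dropLast (h : l.getLast? = some c) (hc : c ∉ T) :
    restrictPref l.dropLast T = restrictPref l T := by
  obtain ⟨s, rfl⟩ := List.getLast?_eq_some_iff.1 h
  rw [List.dropLast_concat, restrictPref_append_singleton_of_notMem _ hc]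

theorem restrictPref_append_swap (s : List α) (h : ¬(a ∈ T ∧ c ∈ T)) :
    restrictPref (s ++ [a, c]) T = restrictPref (s ++ [c, a]) T := by
  by_cases ha : a ∈ T <;> by_cases hc : c ∈ T <;> simp_all [restrictPref]

end Restriction

section Preferences

variable {A S : Finset α} {l : List α} {c : α}

theorem prefOn_finite (A : Finset α) : (PrefOn A).Finite := by
  refine (A.toList.permutations.toFinset).finite_toSet.subset fun l hl => ?_
  simp only [List.coe_toFinset, Set.mem_ofPred_eq, List.mem_permutations]
  exact List.perm_of_nodup_nodup_toFinset_eq hl.1 A.nodup_toList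
    (by rw [hl.2, Finset.toList_toFinset])

theorem toList_mem_prefOn (A : Finset α) : A.toList ∈ PrefOn A :=
  ⟨A.nodup_toList, A.toList_toFinset⟩

theorem length_eq_card_of_mem_prefOn (hl : l ∈ PrefOn A) : l.length = A.card := by
  rw [← hl.2, List.toFinset_card_of_nodup hl.1]

theorem ne_nil_of_mem_prefOn (hl : l ∈ PrefOn A) (hA : A.Nonempty) : l ≠ [] := by
  rintro rfl
  simp [PrefOn, eq_comm (a := ∅), hA.ne_empty] at hl

theorem prefOn_subsingleton (hA : A.card ≤ 1) : (PrefOn A).Subsingleton := by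
  intro l hl l' hl'
  have hperm := List.perm_of_nodup_nodup_toFinset_eq hl.1 hl'.1 (hl.2.trans hl'.2.symm)
  have hlen := length_eq_card_of_mem_prefOn hl
  match l, hperm, hlen with
  | [], hperm, _ => exact (List.nil_perm.1 hperm).symm
  | [x], hperm, _ => exact (List.perm_singleton.1 hperm.symm).symm
  | _ :: _ :: _, _, hlen => simp at hlen; omega

theorem append_singleton_mem_prefOn_iff :
    l ++ [c] ∈ PrefOn A ↔ c ∈ A ∧ l ∈ PrefOn (A.erase c) := by
  simp only [PrefOn, Set.mem_ofPred_eq, List.nodup_append, List.nodup_singleton,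
    List.mem_singleton, List.toFinset_append, List.toFinset_cons, List.toFinset_nil,
    insert_empty_eq]
  constructor
  · rintro ⟨⟨hnd, -, hc⟩, rfl⟩
    have hcl : c ∉ l := fun h => hc c h c rfl rfl
    refine ⟨by simp, hnd, ?_⟩
    rw [Finset.union_comm, ← Finset.insert_eq, Finset.erase_insert (by simpa using hcl)]
  · rintro ⟨hcA, hnd, hl⟩
    refine ⟨⟨hnd, trivial, ?_⟩, ?_⟩
    · rintro x hx _ rfl rfl
      exact A.notMem_erase x (hl ▸ List.mem_toFinset.2 hx)
    · rw [hl, Finset.union_comm, ← Finset.insert_eq, Finset.insert_erase hcA]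

theorem restrictPref_mem_prefOn (hl : l ∈ PrefOn A) (hS : S ⊆ A) :
    restrictPref l S ∈ PrefOn S := by
  refine ⟨hl.1.filter _, ?_⟩
  rw [restrictPref, List.toFinset_filter, hl.2]
  ext y
  simpa using fun h => hS h

theorem bottoms_subset {D : Set (List α)} (hD : D ⊆ PrefOn A) : bottoms D ⊆ A := by
  rintro c ⟨l, hl, hc⟩
  obtain ⟨s, rfl⟩ := List.getLast?_eq_some_iff.1 hc
  exact (append_singleton_mem_prefOn_iff.1 (hD hl)).1

theorem dropBottom_subset_prefOn {D : Set (List α)} (hD : D ⊆ PrefOn A) (c : α) :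
    dropBottom D c ⊆ PrefOn (A.erase c) := by
  rintro _ ⟨l, ⟨hl, hc⟩, rfl⟩
  obtain ⟨s, rfl⟩ := List.getLast?_eq_some_iff.1 hc
  rw [List.dropLast_concat]
  exact (append_singleton_mem_prefOn_iff.1 (hD hl)).2

end Preferences

section ASPD

variable {A T : Finset α} {D : Set (List α)} {l m : List α} {a c x : α}

theorem NeverLast.insert (hx : NeverLast D T x) (hm : m ∈ D)
    (hlm : (restrictPref l T).getLast? = (restrictPref m T).getLast?) :
    NeverLast (insert l D) T x :=
  Set.forall_mem_insert.2 ⟨hlm ▸ hx m hm, hx⟩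

theorem isASPD_of_card_lt_three (hD : D ⊆ PrefOn A) (hA : A.card < 3) : IsASPD A D :=
  ⟨hD, fun T hT h3 => absurd (Finset.card_le_card hT) (by omega)⟩

theorem isASPD_singleton (hl : l ∈ PrefOn A) : IsASPD A {l} := by
  refine ⟨Set.singleton_subset_iff.2 hl, fun T _ h3 => ?_⟩
  obtain ⟨y, hy⟩ := Finset.card_pos.1 (by omega : 0 < T.card)
  cases hlast : (restrictPref l T).getLast? with
  | none => exact ⟨y, hy, by simp [hlast]⟩
  | some z =>
    obtain ⟨x, hx, hxz⟩ := Finset.exists_mem_ne (by omega : 1 < T.card) z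
    exact ⟨x, hx, by simpa [hlast] using hxz.symm⟩

theorem IsASPD.not_subset_bottoms (hD : IsASPD A D) (hT : T ⊆ A)
    (h3 : T.card = 3) : ¬(T : Set α) ⊆ bottoms D := fun hTD => by
  obtain ⟨x, hxT, hx⟩ := hD.2 T hT h3
  obtain ⟨m, hm, hmx⟩ := hTD hxT
  exact hx m hm (getLast?_restrictPref hmx hxT)

theorem IsASPD.isASPD_dropBottom (hD : IsASPD A D) (c : α) :
    IsASPD (A.erase c) (dropBottom D c) := by
  refine ⟨dropBottom_subset_prefOn hD.1 c, fun T hT h3 => ?_⟩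
  have hcT : c ∉ T := (Finset.subset_erase.1 hT).2
  obtain ⟨x, hxT, hx⟩ := hD.2 T (hT.trans (A.erase_subset c)) h3
  refine ⟨x, hxT, ?_⟩
  rintro _ ⟨l, ⟨hl, hlc⟩, rfl⟩
  rw [restrictPref_dropLast hlc hcT]
  exact hx l hl

omit [DecidableEq α] in
theorem ncard_dropBottom (D : Set (List α)) (c : α) :
    (dropBottom D c).ncard = {l ∈ D | l.getLast? = some c}.ncard := by
  refine Set.InjOn.ncard_image fun l₁ h₁ l₂ h₂ h => ?_
  obtain ⟨s₁, rfl⟩ := List.getLast?_eq_some_iff.1 h₁.2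
  obtain ⟨s₂, rfl⟩ := List.getLast?_eq_some_iff.1 h₂.2
  simp_all

omit [DecidableEq α] in
theorem ncard_eq_ncard_dropBottom_add (hfin : D.Finite) (hne : ∀ l ∈ D, l ≠ []) {b : α}
    (hab : a ≠ b) (hbot : bottoms D = {a, b}) :
    D.ncard = (dropBottom D a).ncard + (dropBottom D b).ncard := by
  have hsplit : D = {l ∈ D | l.getLast? = some a} ∪ {l ∈ D | l.getLast? = some b} := by
    ext l
    refine ⟨fun hl => ?_, fun hl => hl.elim (·.1) (·.1)⟩
    have hlast : l.getLast? = some (l.getLast (hne l hl)) := List.getLast?_eq_some_getLast _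
    have hmem : l.getLast (hne l hl) ∈ bottoms D := ⟨l, hl, hlast⟩
    rw [hbot] at hmem
    rcases hmem with h | h
    · exact Or.inl ⟨hl, h ▸ hlast⟩
    · exact Or.inr ⟨hl, h ▸ hlast⟩
  have hdisj : Disjoint {l ∈ D | l.getLast? = some a} {l ∈ D | l.getLast? = some b} :=
    Set.disjoint_left.2 fun l ha hb => hab (Option.some.inj (ha.2.symm.trans hb.2))
  rw [ncard_dropBottom, ncard_dropBottom]
  conv_lhs => rw [hsplit]
  exact Set.ncard_union_eq hdisj (hfin.subset fun _ h => h.1) (hfin.subset fun _ h => h.1)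

end ASPD

section Maximal

variable {A : Finset α} {D : Set (List α)} {l : List α} {a c : α}

theorem IsMaximalASPD.mem_of_isASPD_insert (hD : IsMaximalASPD A D)
    (h : IsASPD A (insert l D)) : l ∈ D := by
  by_contra hl
  exact hD.2 l (h.1 (Set.mem_insert l D)) hl h

theorem IsMaximalASPD.eq_prefOn_of_card_lt_three (hD : IsMaximalASPD A D) (hA : A.card < 3) :
    D = PrefOn A :=
  hD.1.1.antisymm fun _ hl =>
    hD.mem_of_isASPD_insert (isASPD_of_card_lt_three (Set.insert_subset hl hD.1.1) hA)

theorem IsMaximalASPD.nonempty (hD : IsMaximalASPD A D) : D.Nonempty := by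
  by_contra h
  rw [Set.not_nonempty_iff_eq_empty] at h
  subst h
  exact hD.mem_of_isASPD_insert (l := A.toList)
    (by simpa using isASPD_singleton (toList_mem_prefOn A))

theorem IsMaximalASPD.restrictPref_erase_append_mem (hD : IsMaximalASPD A D)
    (hc : c ∈ bottoms D) (hl : l ∈ D) : restrictPref l (A.erase c) ++ [c] ∈ D := by
  have hpref : restrictPref l (A.erase c) ++ [c] ∈ PrefOn A :=
    append_singleton_mem_prefOn_iff.2
      ⟨bottoms_subset hD.1.1 hc, restrictPref_mem_prefOn (hD.1.1 hl) (A.erase_subset c)⟩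
  refine hD.mem_of_isASPD_insert ⟨Set.insert_subset hpref hD.1.1, fun T hT h3 => ?_⟩
  obtain ⟨x, hxT, hx⟩ := hD.1.2 T hT h3
  refine ⟨x, hxT, ?_⟩
  -- the new preference ends a triple either as some member of `D` ending in `c` or as `l` does
  by_cases hcT : c ∈ T
  · obtain ⟨m, hm, hmc⟩ := hc
    refine NeverLast.insert hx hm ?_
    rw [getLast?_restrictPref hmc hcT, restrictPref_append_singleton_of_mem _ hcT,
      List.getLast?_concat]
  · refine NeverLast.insert hx hl ?_
    rw [restrictPref_append_singleton_of_notMem _ hcT,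
      restrictPref_restrictPref _ (Finset.subset_erase.2 ⟨hT, hcT⟩)]

theorem IsMaximalASPD.isMaximalASPD_dropBottom (hD : IsMaximalASPD A D) (hc : c ∈ bottoms D) :
    IsMaximalASPD (A.erase c) (dropBottom D c) := by
  refine ⟨hD.1.isASPD_dropBottom c, fun l hl hlD hins => hlD ?_⟩
  have hpref : l ++ [c] ∈ PrefOn A :=
    append_singleton_mem_prefOn_iff.2 ⟨bottoms_subset hD.1.1 hc, hl⟩
  refine ⟨l ++ [c], ⟨hD.mem_of_isASPD_insert
    ⟨Set.insert_subset hpref hD.1.1, fun T hT h3 => ?_⟩, List.getLast?_concat⟩,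
    List.dropLast_concat⟩
  by_cases hcT : c ∈ T
  · obtain ⟨x, hxT, hx⟩ := hD.1.2 T hT h3
    obtain ⟨m, hm, hmc⟩ := hc
    refine ⟨x, hxT, NeverLast.insert hx hm ?_⟩
    rw [getLast?_restrictPref hmc hcT, restrictPref_append_singleton_of_mem _ hcT,
      List.getLast?_concat]
  · -- on triples avoiding `c`, the witness comes from `insert l (dropBottom D c)`, which contains
    -- every member of `D` restricted to `A.erase c`
    have hTc : T ⊆ A.erase c := Finset.subset_erase.2 ⟨hT, hcT⟩
    obtain ⟨y, hyT, hy⟩ := hins.2 T hTc h3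
    refine ⟨y, hyT, Set.forall_mem_insert.2 ⟨?_, fun m hm => ?_⟩⟩
    · rw [restrictPref_append_singleton_of_notMem _ hcT]
      exact hy l (Set.mem_insert l _)
    · have hmc : restrictPref m (A.erase c) ∈ dropBottom D c :=
        ⟨_, ⟨hD.restrictPref_erase_append_mem hc hm, List.getLast?_concat⟩,
          List.dropLast_concat⟩
      rw [← restrictPref_restrictPref m hTc]
      exact hy _ (Set.mem_insert_of_mem l hmc)

/-- If every preference of `D` ended with `a`, swapping the last two alternatives of one of them
would keep `D` single-peaked: on a triple containing both, the third alternative is never last. -/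
theorem IsMaximalASPD.exists_mem_bottoms_ne (hD : IsMaximalASPD A D) (hA : 2 ≤ A.card)
    (ha : a ∈ bottoms D) : ∃ b ∈ bottoms D, b ≠ a := by
  by_contra! hall
  have hAne : A.Nonempty := Finset.card_pos.1 (by omega)
  have hlast : ∀ m ∈ D, m.getLast? = some a := fun m hm => by
    have h := List.getLast?_eq_some_getLast (ne_nil_of_mem_prefOn (hD.1.1 hm) hAne)
    rwa [← hall _ ⟨m, hm, h⟩]
  obtain ⟨l, hl, hla⟩ := ha
  obtain ⟨s', rfl⟩ := List.getLast?_eq_some_iff.1 hla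
  obtain rfl | ⟨s, c, rfl⟩ := s'.eq_nil_or_concat'
  · have := length_eq_card_of_mem_prefOn (hD.1.1 hl)
    simp at this
    omega
  have hca : c ≠ a := Finset.ne_of_mem_erase
    (append_singleton_mem_prefOn_iff.1 (append_singleton_mem_prefOn_iff.1 (hD.1.1 hl)).2).1
  have hperm : (s ++ [c] ++ [a]).Perm (s ++ [a, c]) := by
    simpa using List.Perm.append_left s (List.Perm.swap a c [])
  have hl' : s ++ [a, c] ∈ PrefOn A :=
    ⟨hperm.nodup_iff.1 (hD.1.1 hl).1,
      (List.toFinset_eq_of_perm _ _ hperm).symm.trans (hD.1.1 hl).2⟩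
  refine hca (hall c ⟨s ++ [a, c], hD.mem_of_isASPD_insert
    ⟨Set.insert_subset hl' hD.1.1, fun T hT h3 => ?_⟩, by simp⟩)
  by_cases hacT : a ∈ T ∧ c ∈ T
  · obtain ⟨z, hzT, hz⟩ := Finset.exists_mem_notMem_of_card_lt_card (s := {a, c}) (t := T)
      (by have := Finset.card_le_two (a := a) (b := c); omega)
    simp only [Finset.mem_insert, Finset.mem_singleton, not_or] at hz
    refine ⟨z, hzT, Set.forall_mem_insert.2 ⟨?_, fun m hm => ?_⟩⟩
    · rw [getLast?_restrictPref (c := c) (by simp) hacT.2]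
      simpa [eq_comm] using hz.2
    · rw [getLast?_restrictPref (hlast m hm) hacT.1]
      simpa [eq_comm] using hz.1
  · obtain ⟨x, hxT, hx⟩ := hD.1.2 T hT h3
    refine ⟨x, hxT, NeverLast.insert hx hl ?_⟩
    rw [restrictPref_append_swap s hacT, List.append_assoc, List.singleton_append]

theorem IsMaximalASPD.bottoms_eq_pair (hD : IsMaximalASPD A D) (hA : 2 ≤ A.card) :
    ∃ a b, a ≠ b ∧ bottoms D = {a, b} := by
  obtain ⟨l, hl⟩ := hD.nonempty
  have hne := ne_nil_of_mem_prefOn (hD.1.1 hl) (Finset.card_pos.1 (by omega))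
  have ha : l.getLast hne ∈ bottoms D := ⟨l, hl, List.getLast?_eq_some_getLast hne⟩
  obtain ⟨b, hb, hba⟩ := hD.exists_mem_bottoms_ne hA ha
  refine ⟨_, b, hba.symm, Set.Subset.antisymm (fun c hc => ?_) (Set.insert_subset ha
    (Set.singleton_subset_iff.2 hb))⟩
  by_contra hcab
  simp only [Set.mem_insert_iff, Set.mem_singleton_iff, not_or] at hcab
  have hT : (({l.getLast hne, b, c} : Finset α) : Set α) ⊆ bottoms D := by
    simpa [Set.insert_subset_iff] using ⟨ha, hb, hc⟩
  exact hD.1.not_subset_bottoms (fun y hy => bottoms_subset hD.1.1 (hT hy))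
    (Finset.card_eq_three.2 ⟨_, _, _, hba.symm, Ne.symm hcab.1, Ne.symm hcab.2, rfl⟩) hT

theorem IsMaximalASPD.ncard_eq (hD : IsMaximalASPD A D) : D.ncard = 2 ^ (A.card - 1) := by
  induction hn : A.card using Nat.strong_induction_on generalizing A D with
  | _ n ih =>
  rcases lt_or_ge n 2 with hlt | hge
  · rw [hD.eq_prefOn_of_card_lt_three (by omega), Nat.sub_eq_zero_of_le (by omega : n ≤ 1),
      Set.ncard_eq_one.2 ⟨_, (prefOn_subsingleton (by omega)).eq_singleton_of_mem
        (toList_mem_prefOn A)⟩, pow_zero]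
  obtain ⟨a, b, hab, hbot⟩ := hD.bottoms_eq_pair (hn ▸ hge)
  have hdrop : ∀ c ∈ bottoms D, (dropBottom D c).ncard = 2 ^ (n - 2) := fun c hc =>
    ih (n - 1) (by omega) (hD.isMaximalASPD_dropBottom hc)
      (by rw [Finset.card_erase_of_mem (bottoms_subset hD.1.1 hc), hn])
  have hne : ∀ l ∈ D, l ≠ [] := fun l hl =>
    ne_nil_of_mem_prefOn (hD.1.1 hl) (Finset.card_pos.1 (by omega))
  rw [ncard_eq_ncard_dropBottom_add ((prefOn_finite A).subset hD.1.1) hne hab hbot,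
    hdrop a (by simp [hbot]), hdrop b (by simp [hbot]), ← two_mul, ← pow_succ']
  congr 1
  omega

end Maximal

/-- A maximal Arrow's single-peaked domain on `A` has `2^{|A| - 1}` elements,
and if `|A| ≥ 2` it has exactly two bottom alternatives. -/
theorem maximal_aspd_card_and_bottoms (A : Finset α) (D : Set (List α))
    (hD : IsMaximalASPD A D) :
    D.ncard = 2 ^ (A.card - 1) ∧
      (2 ≤ A.card → {a : α | ∃ l ∈ D, l.getLast? = some a}.ncard = 2) := by
  refine ⟨hD.ncard_eq, fun hA => ?_⟩
  obtain ⟨a, b, hab, hbot⟩ := hD.bottoms_eq_pair hA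
  exact (congrArg Set.ncard hbot).trans (Set.ncard_pair hab)
end

section
/- Let A be a finite set with |A| ≥ 3 and let a_1, a_2 ∈ A be distinct. Suppose that V_i is a regular vine on A∖{a_i} for i ∈ {1,2} and that V' is a regular vine on A∖{a_1,a_2} with V' ⊆ V_1 ∩ V_2. Then V' = V_1 ∩ V_2. -/
/-!
A regular vine on an `m`-element set has exactly `m + 1 - i` elements of rank `i`: rank `1`
consists of the `m` singletons, and since the rank-`(i+1)` elements are the edges of the `i`-th
associated tree, each rank has one element fewer than the one below.

Let `S ∈ V₁ ∩ V₂` have rank `i`. The rank-`i` elements of `V'` are among those of `V₁ ∩ V₂`,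
and these miss at least one rank-`i` element of `V₁`, namely one lying above `{a₂}`. Since `V'`
has exactly one rank-`i` element fewer than `V₁`, the rank-`i` levels of `V'` and `V₁ ∩ V₂`
coincide, so `S ∈ V'`.
-/

variable {α : Type*} [DecidableEq α]

/-- `T` is covered by `S` in the family `V`, ordered by inclusion. -/
def CoversIn (V : Set (Finset α)) (T S : Finset α) : Prop :=
  T ∈ V ∧ S ∈ V ∧ T ⊂ S ∧ ∀ U ∈ V, T ⊂ U → U ⊂ S → False

/-- `S` is a minimal element of the family `V`, ordered by inclusion. -/
def MinimalIn (V : Set (Finset α)) (S : Finset α) : Prop :=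
  S ∈ V ∧ ∀ T ∈ V, T ⊆ S → T = S

/-- `C` is a maximal chain of the family `V`, ordered by inclusion. -/
def IsMaxChainIn (V C : Set (Finset α)) : Prop :=
  C ⊆ V ∧ IsChain (· ⊆ ·) C ∧ ∀ S ∈ V, IsChain (· ⊆ ·) (insert S C) → S ∈ C

/-- The `i`-th associated graph of a family `V`: vertices are the elements of `V`
of cardinality `i`, and each element of `V` of cardinality `i+1` is an edge
joining the two elements it covers. -/
def vineGraph (V : Set (Finset α)) (i : ℕ) :
    SimpleGraph {S : Finset α // S ∈ V ∧ S.card = i} where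
  Adj S T := S ≠ T ∧ ∃ W ∈ V, W.card = i + 1 ∧ CoversIn V S.1 W ∧ CoversIn V T.1 W
  symm := by
    constructor
    rintro S T ⟨h, W, hW, hc, h1, h2⟩
    exact ⟨h.symm, W, hW, hc, h2, h1⟩
  loopless := by
    constructor
    rintro S ⟨h, -⟩
    exact h rfl

/-- A regular vine on a finite set `A` (poset definition): a family of nonempty
subsets of `A` such that (1) all maximal chains have length `|A| - 1` and all
minimal elements are singletons, (2) there are exactly `|A|` minimal elements,
(3) every non-minimal element covers exactly two elements, (4) each associated
graph is a tree, and (5) proximity holds. -/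
def IsRegularVine (A : Finset α) (V : Set (Finset α)) : Prop :=
  (∀ S ∈ V, S ⊆ A ∧ S.Nonempty) ∧
  (∀ C : Set (Finset α), IsMaxChainIn V C → C.ncard = A.card) ∧
  (∀ S, MinimalIn V S → S.card = 1) ∧
  {S | MinimalIn V S}.ncard = A.card ∧
  (∀ S ∈ V, (∃ T ∈ V, T ⊂ S) → {T | CoversIn V T S}.ncard = 2) ∧
  (∀ i : ℕ, 1 ≤ i → i ≤ A.card - 1 → (vineGraph V i).IsTree) ∧
  (∀ S ∈ V, ∀ T ∈ V, S ≠ T → S.card = T.card → 2 ≤ S.card →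
    (∃ W, CoversIn V S W ∧ CoversIn V T W) → ∃ U, CoversIn V U S ∧ CoversIn V U T)

set_option linter.unusedSectionVars false

def rankLevel (V : Set (Finset α)) (i : ℕ) : Set (Finset α) :=
  {S | S ∈ V ∧ S.card = i}

lemma rankLevel_subset (V : Set (Finset α)) (i : ℕ) : rankLevel V i ⊆ V :=
  fun _ hS => hS.1

lemma rankLevel_mono {V W : Set (Finset α)} (h : V ⊆ W) (i : ℕ) :
    rankLevel V i ⊆ rankLevel W i :=
  fun _ hS => ⟨h hS.1, hS.2⟩

lemma IsChain.injOn_card {C : Set (Finset α)} (hC : IsChain (· ⊆ ·) C) :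
    Set.InjOn Finset.card C := fun _ hS _ hT h =>
  (hC.total hS hT).elim (fun hST => Finset.eq_of_subset_of_card_le hST h.ge)
    (fun hTS => (Finset.eq_of_subset_of_card_le hTS h.le).symm)

lemma exists_isMaxChainIn_superset (V : Set (Finset α)) {C₀ : Set (Finset α)} (hC₀V : C₀ ⊆ V)
    (hC₀ : IsChain (· ⊆ ·) C₀) : ∃ C, IsMaxChainIn V C ∧ C₀ ⊆ C := by
  have hc : @IsChain V (·.1 ⊆ ·.1) (Subtype.val ⁻¹' C₀) :=
    (isChain_preimage_subtypeVal V C₀).2 (hC₀.mono Set.inter_subset_right)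
  obtain ⟨M, hM, hcM⟩ := hc.exists_maxChain
  refine ⟨Subtype.val '' M, ⟨?_, ?_, ?_⟩, fun S hS => ⟨⟨S, hC₀V hS⟩, hcM hS, rfl⟩⟩
  · rintro _ ⟨S, -, rfl⟩
    exact S.2
  · exact hM.1.image_of_map_rel _ _ Subtype.val fun _ _ h => h
  · intro S hS hchain
    have hM' : @IsChain V (·.1 ⊆ ·.1) (Subtype.val ⁻¹' insert S (Subtype.val '' M)) :=
      (isChain_preimage_subtypeVal V _).2 (hchain.mono Set.inter_subset_right)
    have hMeq := hM.2 hM' fun T hT => Set.mem_insert_of_mem _ ⟨T, hT, rfl⟩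
    exact ⟨⟨S, hS⟩, hMeq ▸ Set.mem_insert S _, rfl⟩

lemma Finset.union_eq_of_card_eq_add_one {T U W : Finset α} (hTU : T ≠ U)
    (hcard : T.card = U.card) (hT : T ⊆ W) (hU : U ⊆ W) (hW : W.card = T.card + 1) :
    T ∪ U = W := by
  have hUT : ¬U ⊆ T := fun h => hTU (Finset.eq_of_subset_of_card_le h hcard.le).symm
  have hlt : T.card < (T ∪ U).card :=
    Finset.card_lt_card (Finset.ssubset_iff_subset_ne.2
      ⟨Finset.subset_union_left, fun h => hUT (h ▸ Finset.subset_union_right)⟩)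
  exact Finset.eq_of_subset_of_card_le (Finset.union_subset hT hU) (by omega)

lemma vineGraph_adj_coversIn_union {V : Set (Finset α)} {i : ℕ}
    {x y : {S : Finset α // S ∈ V ∧ S.card = i}} (h : (vineGraph V i).Adj x y) :
    CoversIn V x.1 (x.1 ∪ y.1) ∧ CoversIn V y.1 (x.1 ∪ y.1) := by
  obtain ⟨hne, W, -, hW, hx, hy⟩ := h
  rw [Finset.union_eq_of_card_eq_add_one (Subtype.coe_ne_coe.2 hne) (x.2.2.trans y.2.2.symm)
    hx.2.2.1.subset hy.2.2.1.subset (by rw [hW, x.2.2])]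
  exact ⟨hx, hy⟩

namespace IsRegularVine

variable {B : Finset α} {V : Set (Finset α)}

lemma finite (hV : IsRegularVine B V) : V.Finite :=
  B.powerset.finite_toSet.subset fun S hS =>
    Finset.mem_coe.2 (Finset.mem_powerset.2 (hV.1 S hS).1)

lemma image_card_of_isMaxChainIn (hV : IsRegularVine B V) {C : Set (Finset α)}
    (hC : IsMaxChainIn V C) : Finset.card '' C = Set.Icc 1 B.card := by
  have hsub : Finset.card '' C ⊆ Set.Icc 1 B.card := by
    rintro _ ⟨S, hS, rfl⟩
    obtain ⟨hSB, hSne⟩ := hV.1 S (hC.1 hS)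
    exact ⟨hSne.card_pos, Finset.card_le_card hSB⟩
  refine Set.eq_of_subset_of_ncard_le hsub ?_ (Set.finite_Icc _ _)
  rw [hC.2.1.injOn_card.ncard_image, hV.2.1 C hC, Set.ncard_Icc_nat]
  omega

lemma exists_card_eq_of_isChain (hV : IsRegularVine B V) {C₀ : Set (Finset α)}
    (hC₀V : C₀ ⊆ V) (hC₀ : IsChain (· ⊆ ·) C₀) {i : ℕ} (h1 : 1 ≤ i) (h2 : i ≤ B.card) :
    ∃ U ∈ V, U.card = i ∧ ∀ S ∈ C₀, S ⊆ U ∨ U ⊆ S := by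
  obtain ⟨C, hC, hC₀C⟩ := exists_isMaxChainIn_superset V hC₀V hC₀
  obtain ⟨U, hU, rfl⟩ : i ∈ Finset.card '' C := hV.image_card_of_isMaxChainIn hC ▸ ⟨h1, h2⟩
  exact ⟨U, hC.1 hU, rfl, fun S hS => hC.2.1.total (hC₀C hS) hU⟩

lemma exists_superset_card_eq (hV : IsRegularVine B V) {S : Finset α} (hS : S ∈ V) {i : ℕ}
    (h1 : S.card ≤ i) (h2 : i ≤ B.card) : ∃ U ∈ V, S ⊆ U ∧ U.card = i := by
  obtain ⟨U, hU, rfl, hcomp⟩ := hV.exists_card_eq_of_isChain (Set.singleton_subset_iff.2 hS)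
    IsChain.singleton ((hV.1 S hS).2.card_pos.trans_le h1) h2
  refine ⟨U, hU, ?_, rfl⟩
  rcases hcomp S rfl with hSU | hUS
  · exact hSU
  · exact (Finset.eq_of_subset_of_card_le hUS h1).ge

lemma card_eq_add_one_of_coversIn (hV : IsRegularVine B V) {T S : Finset α}
    (h : CoversIn V T S) : S.card = T.card + 1 := by
  obtain ⟨hT, hS, hTS, hcov⟩ := h
  have hlt := Finset.card_lt_card hTS
  obtain ⟨U, hU, hUcard, hcomp⟩ := hV.exists_card_eq_of_isChain (C₀ := {T, S})
    (Set.insert_subset hT (Set.singleton_subset_iff.2 hS)) (IsChain.pair hTS.subset)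
    (Nat.le_add_left 1 T.card) (hlt.trans_le (Finset.card_le_card (hV.1 S hS).1))
  have hTU : T ⊂ U := by
    rcases hcomp T (Set.mem_insert T _) with hTU | hUT
    · exact Finset.ssubset_iff_subset_ne.2 ⟨hTU, by rintro rfl; omega⟩
    · have := Finset.card_le_card hUT
      omega
  rcases hcomp S (Set.mem_insert_of_mem T rfl) with hSU | hUS
  · have := Finset.card_le_card hSU
    omega
  · rcases hUS.eq_or_ssubset with rfl | hUS
    · exact hUcard
    · exact (hcov U hU hTU hUS).elim

lemma rankLevel_one (hV : IsRegularVine B V) : rankLevel V 1 = {S | MinimalIn V S} := by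
  ext S
  exact ⟨fun ⟨hS, hcard⟩ => ⟨hS, fun T hT hTS =>
      Finset.eq_of_subset_of_card_le hTS (hcard ▸ (hV.1 T hT).2.card_pos)⟩,
    fun h => ⟨h.1, hV.2.2.1 S h⟩⟩

lemma singleton_mem (hV : IsRegularVine B V) {b : α} (hb : b ∈ B) : {b} ∈ V := by
  have hsub : rankLevel V 1 ⊆ (fun b => {b}) '' (B : Set α) := by
    rintro S ⟨hS, hcard⟩
    obtain ⟨c, rfl⟩ := Finset.card_eq_one.1 hcard
    exact ⟨c, Finset.singleton_subset_iff.1 (hV.1 _ hS).1, rfl⟩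
  have heq := Set.eq_of_subset_of_ncard_le hsub (by
    rw [Set.ncard_image_of_injective _ Finset.singleton_injective, Set.ncard_coe_finset,
      hV.rankLevel_one, hV.2.2.2.1]) (B.finite_toSet.image _)
  exact (heq ▸ ⟨b, hb, rfl⟩ : {b} ∈ rankLevel V 1).1

lemma exists_ne_coversIn (hV : IsRegularVine B V) {W : Finset α} (hW : W ∈ V)
    (h2 : 2 ≤ W.card) : ∃ T U, T ≠ U ∧ CoversIn V T W ∧ CoversIn V U W := by
  have hnmin : ∃ T ∈ V, T ⊂ W := by
    by_contra! h
    have := hV.2.2.1 W ⟨hW, fun T hT hTW =>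
      by_contra fun hne => h T hT (Finset.ssubset_iff_subset_ne.2 ⟨hTW, hne⟩)⟩
    omega
  obtain ⟨T, U, hTU, hset⟩ := Set.ncard_eq_two.1 (hV.2.2.2.2.1 W hW hnmin)
  have hT : T ∈ {X | CoversIn V X W} := hset ▸ Set.mem_insert T {U}
  have hU : U ∈ {X | CoversIn V X W} := hset ▸ Set.mem_insert_of_mem T rfl
  exact ⟨T, U, hTU, hT, hU⟩

lemma eq_or_eq_of_coversIn (hV : IsRegularVine B V) {T U X W : Finset α} (hTU : T ≠ U)
    (hT : CoversIn V T W) (hU : CoversIn V U W) (hX : CoversIn V X W) : X = T ∨ X = U := by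
  obtain ⟨Y, Z, -, hset⟩ :=
    Set.ncard_eq_two.1 (hV.2.2.2.2.1 W hT.2.1 ⟨T, hT.1, hT.2.2.1⟩)
  have mem : ∀ {X}, CoversIn V X W → X = Y ∨ X = Z := fun h => by
    simpa using (hset ▸ h : _ ∈ ({Y, Z} : Set (Finset α)))
  rcases mem hT with rfl | rfl <;> rcases mem hU with rfl | rfl <;> rcases mem hX with rfl | rfl <;>
    simp_all

lemma ncard_edgeSet_vineGraph (hV : IsRegularVine B V) {i : ℕ} (hi : 1 ≤ i) :
    (vineGraph V i).edgeSet.ncard = (rankLevel V (i + 1)).ncard := by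
  let F : Sym2 {S : Finset α // S ∈ V ∧ S.card = i} → Finset α :=
    Sym2.lift ⟨fun x y => x.1 ∪ y.1, fun _ _ => Finset.union_comm _ _⟩
  have mem_iff : ∀ e ∈ (vineGraph V i).edgeSet, ∀ z, z ∈ e ↔ CoversIn V z.1 (F e) := by
    intro e he z
    induction e using Sym2.ind with | h x y => ?_
    obtain ⟨hx, hy⟩ := vineGraph_adj_coversIn_union he
    refine ⟨fun hz => by rcases Sym2.mem_iff.1 hz with rfl | rfl <;> assumption, fun hz => ?_⟩
    rcases hV.eq_or_eq_of_coversIn (Subtype.coe_ne_coe.2 he.1) hx hy hz with h | h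
    · exact Sym2.mem_iff.2 (Or.inl (Subtype.ext h))
    · exact Sym2.mem_iff.2 (Or.inr (Subtype.ext h))
  have hinj : Set.InjOn F (vineGraph V i).edgeSet := fun e he e' he' h =>
    Sym2.ext fun z => (mem_iff e he z).trans (h ▸ (mem_iff e' he' z).symm)
  have himage : F '' (vineGraph V i).edgeSet = rankLevel V (i + 1) := by
    ext W
    constructor
    · rintro ⟨e, he, rfl⟩
      induction e using Sym2.ind with | h x y => ?_
      obtain ⟨hx, -⟩ := vineGraph_adj_coversIn_union he
      exact ⟨hx.2.1, (hV.card_eq_add_one_of_coversIn hx).trans (congrArg (· + 1) x.2.2)⟩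
    · rintro ⟨hW, hcard⟩
      obtain ⟨T, U, hTU, hT, hU⟩ := hV.exists_ne_coversIn hW (by omega)
      have hTcard : T.card = i := by have := hV.card_eq_add_one_of_coversIn hT; omega
      have hUcard : U.card = i := by have := hV.card_eq_add_one_of_coversIn hU; omega
      refine ⟨s(⟨T, hT.1, hTcard⟩, ⟨U, hU.1, hUcard⟩),
        ⟨fun h => hTU (congrArg Subtype.val h), W, hW, hcard, hT, hU⟩, ?_⟩
      exact Finset.union_eq_of_card_eq_add_one hTU (hTcard.trans hUcard.symm)
        hT.2.2.1.subset hU.2.2.1.subset (by rw [hcard, hTcard])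
  rw [← himage, hinj.ncard_image]

lemma ncard_rankLevel_succ_add_one (hV : IsRegularVine B V) {i : ℕ} (h1 : 1 ≤ i)
    (h2 : i ≤ B.card - 1) : (rankLevel V (i + 1)).ncard + 1 = (rankLevel V i).ncard := by
  have : Finite {S : Finset α // S ∈ V ∧ S.card = i} :=
    (hV.finite.subset (rankLevel_subset V i)).to_subtype
  rw [← hV.ncard_edgeSet_vineGraph h1, ← Nat.card_coe_set_eq, ← Nat.card_coe_set_eq]
  exact (SimpleGraph.isTree_iff_connected_and_card.1 (hV.2.2.2.2.2.1 i h1 h2)).2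

lemma ncard_rankLevel_add (hV : IsRegularVine B V) {i : ℕ} (h1 : 1 ≤ i) (h2 : i ≤ B.card) :
    (rankLevel V i).ncard + i = B.card + 1 := by
  induction i, h1 using Nat.le_induction with
  | base => rw [hV.rankLevel_one, hV.2.2.2.1]
  | succ i hi ih =>
    have := hV.ncard_rankLevel_succ_add_one hi (by omega)
    have := ih (by omega)
    omega

lemma eq_of_subset_of_notMem {V' W : Set (Finset α)} {b : α} (hV : IsRegularVine B V)
    (hV' : IsRegularVine (B.erase b) V') (hb : b ∈ B) (hV'W : V' ⊆ W) (hWV : W ⊆ V)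
    (hW : ∀ S ∈ W, b ∉ S) : V' = W := by
  refine hV'W.antisymm fun S hS => ?_
  obtain ⟨hSB, hSne⟩ := hV.1 S (hWV hS)
  have hi : 1 ≤ S.card := hSne.card_pos
  have hiB : S.card ≤ (B.erase b).card :=
    Finset.card_le_card (Finset.subset_erase.2 ⟨hSB, hW S hS⟩)
  have hcard : (B.erase b).card + 1 = B.card := Finset.card_erase_add_one hb
  obtain ⟨U, hU, hbU, hUcard⟩ := hV.exists_superset_card_eq (i := S.card) (hV.singleton_mem hb)
    (by rwa [Finset.card_singleton]) (by omega)
  have hUW : U ∉ W := fun h => hW U h (Finset.singleton_subset_iff.1 hbU)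
  have hfin : (rankLevel V S.card).Finite := hV.finite.subset (rankLevel_subset V _)
  have hlt : (rankLevel W S.card).ncard < (rankLevel V S.card).ncard :=
    Set.ncard_lt_ncard (Set.ssubset_iff_subset_ne.2 ⟨rankLevel_mono hWV _,
      fun h => hUW (h ▸ ⟨hU, hUcard⟩ : U ∈ rankLevel W S.card).1⟩) hfin
  have hlevel : rankLevel V' S.card = rankLevel W S.card := by
    refine Set.eq_of_subset_of_ncard_le (rankLevel_mono hV'W _) ?_
      (hfin.subset (rankLevel_mono hWV _))
    have := hV'.ncard_rankLevel_add hi hiB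
    have := hV.ncard_rankLevel_add hi (by omega)
    omega
  exact (hlevel.ge ⟨hS, rfl⟩).1

end IsRegularVine

theorem vine_intersection_general (A : Finset α)
    (a₁ a₂ : α) (ha₂ : a₂ ∈ A) (hne : a₁ ≠ a₂)
    (V₁ V₂ V' : Set (Finset α))
    (hV₁ : IsRegularVine (A.erase a₁) V₁) (hV₂ : IsRegularVine (A.erase a₂) V₂)
    (hV' : IsRegularVine (A \ {a₁, a₂}) V') (hsub : V' ⊆ V₁ ∩ V₂) :
    V' = V₁ ∩ V₂ := by
  have hA : A \ {a₁, a₂} = (A.erase a₁).erase a₂ := by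
    ext x
    simp only [Finset.mem_sdiff, Finset.mem_erase, Finset.mem_insert, Finset.mem_singleton]
    tauto
  rw [hA] at hV'
  exact hV₁.eq_of_subset_of_notMem hV' (Finset.mem_erase.2 ⟨hne.symm, ha₂⟩) hsub
    Set.inter_subset_left fun S hS h => Finset.notMem_erase a₂ A ((hV₂.1 S hS.2).1 h)

/-- If `V₁`, `V₂` are regular vines on `A ∖ {a₁}`, `A ∖ {a₂}` and `V'` is a
regular vine on `A ∖ {a₁, a₂}` with `V' ⊆ V₁ ∩ V₂`, then `V' = V₁ ∩ V₂`. -/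
theorem vine_intersection (A : Finset α) (h3 : 3 ≤ A.card)
    (a₁ a₂ : α) (ha₁ : a₁ ∈ A) (ha₂ : a₂ ∈ A) (hne : a₁ ≠ a₂)
    (V₁ V₂ V' : Set (Finset α))
    (hV₁ : IsRegularVine (A.erase a₁) V₁) (hV₂ : IsRegularVine (A.erase a₂) V₂)
    (hV' : IsRegularVine (A \ {a₁, a₂}) V') (hsub : V' ⊆ V₁ ∩ V₂) :
    V' = V₁ ∩ V₂ :=
  vine_intersection_general A a₁ a₂ ha₂ hne V₁ V₂ V' hV₁ hV₂ hV' hsub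
end
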